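/- For all reals t ≥ 0 and δ ≥ 0, the standard Gaussian tail satisfies Q(t)^{δ²}/(√(2π)·(δ·t + λ0)) ≤ Q(δ·t) ≤ (√(2π)·(t + λ0))^{δ²} · Q(t)^{δ²}. -/

import Mathlib

/-!
Both bounds combine the Chernoff bound `Q s ≤ exp (-s² / 2)` with the reverse estimate
`exp (-s² / 2) ≤ √(2π) (s + λ₀) Q s` for `s ≥ 0`, once at `s = δ t` and once at `s = t` raised
to the power `δ²`, since `exp (-t² / 2) ^ δ² = exp (-(δ t)² / 2)`.

For the reverse estimate, `g s = √(2π) (s + λ₀) Q s - exp (-s² / 2)` vanishes at `0`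
(because `√(2π) λ₀ = 2` and `Q 0 = 1 / 2`) and at infinity, and
`g'' s = (λ₀ s - 1) exp (-s² / 2)`. Hence `g'` increases to its limit `0` on `[1/λ₀, ∞)`, so `g`
decreases to `0` there, while on `[0, 1/λ₀]` the function `g` is concave with nonnegative values
at the endpoints.
-/

open MeasureTheory ProbabilityTheory Real

/-- Standard Gaussian upper tail probability. -/
noncomputable def Q (t : ℝ) : ℝ := ((gaussianReal 0 1) (Set.Ioi t)).toReal

noncomputable def lam0 : ℝ := Real.sqrt (2 / Real.pi)

open Set Filter Topology

theorem nonneg_of_deriv2_nonpos_of_nonneg {g g' g'' : ℝ → ℝ} {a b : ℝ}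
    (hg : ∀ x, HasDerivAt g (g' x) x) (hg' : ∀ x, HasDerivAt g' (g'' x) x)
    (hg''_nonpos : ∀ x ∈ Ioo a b, g'' x ≤ 0) (hg''_nonneg : ∀ x ∈ Ioi b, 0 ≤ g'' x)
    (hg_top : Tendsto g atTop (𝓝 0)) (hg'_top : Tendsto g' atTop (𝓝 0))
    (ha : 0 ≤ g a) {x : ℝ} (hx : a ≤ x) : 0 ≤ g x := by
  have hg_cont : Continuous g := continuous_iff_continuousAt.2 fun x ↦ (hg x).continuousAt
  have hg'_cont : Continuous g' := continuous_iff_continuousAt.2 fun x ↦ (hg' x).continuousAt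
  have hg'_mono : MonotoneOn g' (Ici b) :=
    monotoneOn_of_hasDerivWithinAt_nonneg (convex_Ici b) hg'_cont.continuousOn
      (fun x _ ↦ (hg' x).hasDerivWithinAt) (by simpa using hg''_nonneg)
  have hg_anti : AntitoneOn g (Ici b) := by
    refine antitoneOn_of_hasDerivWithinAt_nonpos (convex_Ici b) hg_cont.continuousOn
      (fun x _ ↦ (hg x).hasDerivWithinAt) fun y hy ↦ ?_
    rw [interior_Ici] at hy
    exact ge_of_tendsto hg'_top <| eventually_atTop.2
      ⟨y, fun z hz ↦ hg'_mono (mem_Ici.2 hy.out.le) (mem_Ici.2 (hy.out.le.trans hz)) hz⟩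
  have hg_nonneg_of_le : ∀ y, b ≤ y → 0 ≤ g y := fun y hy ↦
    le_of_tendsto hg_top <| eventually_atTop.2
      ⟨y, fun z hz ↦ hg_anti (mem_Ici.2 hy) (mem_Ici.2 (hy.trans hz)) hz⟩
  rcases le_total b x with hbx | hxb
  · exact hg_nonneg_of_le x hbx
  have hconc : ConcaveOn ℝ (Icc a b) g :=
    concaveOn_of_hasDerivWithinAt2_nonpos (convex_Icc a b) hg_cont.continuousOn
      (fun x _ ↦ (hg x).hasDerivWithinAt) (fun x _ ↦ (hg' x).hasDerivWithinAt)
      (by simpa using hg''_nonpos)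
  have hab : a ≤ b := hx.trans hxb
  exact (le_min ha (hg_nonneg_of_le b le_rfl)).trans <|
    hconc.min_le_of_mem_Icc (left_mem_Icc.2 hab) (right_mem_Icc.2 hab) ⟨hx, hxb⟩

theorem hasDerivAt_integral_Ioi {E : Type*} [NormedAddCommGroup E] [NormedSpace ℝ E]
    [CompleteSpace E] {f : ℝ → E} (hf : Integrable f) (hf_cont : Continuous f) (t : ℝ) :
    HasDerivAt (fun t ↦ ∫ x in Ioi t, f x) (-f t) t := by
  have h : (fun t ↦ ∫ x in Ioi t, f x) = fun t ↦ (∫ x in Ioi 0, f x) - ∫ x in 0..t, f x := by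
    ext t
    rw [← intervalIntegral.integral_Ioi_sub_Ioi' hf.integrableOn hf.integrableOn, sub_sub_cancel]
  rw [h]
  exact (intervalIntegral.integral_hasDerivAt_right hf.intervalIntegrable
    hf_cont.stronglyMeasurable.stronglyMeasurableAtFilter hf_cont.continuousAt).const_sub _

lemma sqrt_two_pi_mul_lam0 : √(2 * π) * lam0 = 2 := by
  rw [lam0, ← sqrt_mul (by positivity), show 2 * π * (2 / π) = 2 ^ 2 by field_simp,
    sqrt_sq zero_le_two]

lemma gaussianPDFReal_zero_one (x : ℝ) :
    gaussianPDFReal 0 1 x = (√(2 * π))⁻¹ * exp (-x ^ 2 / 2) := by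
  simp [gaussianPDFReal_def, neg_div]

lemma sqrt_two_pi_mul_gaussianPDFReal (x : ℝ) :
    √(2 * π) * gaussianPDFReal 0 1 x = exp (-x ^ 2 / 2) := by
  rw [gaussianPDFReal_zero_one, mul_inv_cancel_left₀ (by positivity)]

lemma lam0_pos : 0 < lam0 := sqrt_pos.2 (by positivity)

lemma Q_nonneg (t : ℝ) : 0 ≤ Q t := ENNReal.toReal_nonneg

lemma Q_eq_integral (t : ℝ) : Q t = ∫ x in Ioi t, gaussianPDFReal 0 1 x := by
  rw [Q, gaussianReal_apply_eq_integral 0 one_ne_zero, ENNReal.toReal_ofReal]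
  exact setIntegral_nonneg measurableSet_Ioi fun x _ ↦ gaussianPDFReal_nonneg 0 1 x

lemma hasDerivAt_Q (t : ℝ) : HasDerivAt Q (-gaussianPDFReal 0 1 t) t := by
  rw [funext Q_eq_integral]
  exact hasDerivAt_integral_Ioi (integrable_gaussianPDFReal 0 1)
    (by rw [gaussianPDFReal_def]; fun_prop) t

lemma Q_zero : Q 0 = 1 / 2 := by
  have h : ∀ x, gaussianPDFReal 0 1 x = (√(2 * π))⁻¹ * exp (-2⁻¹ * x ^ 2) := fun x ↦ by
    rw [gaussianPDFReal_zero_one]; ring_nf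
  rw [Q_eq_integral, funext h, integral_const_mul, integral_gaussian_Ioi,
    show π / 2⁻¹ = 2 * π by ring]
  field_simp

lemma Q_le_exp_neg_sq_div_two {s : ℝ} (hs : 0 ≤ s) : Q s ≤ exp (-s ^ 2 / 2) := by
  calc Q s ≤ (gaussianReal 0 1).real {x | s ≤ x} :=
        measureReal_mono fun x hx ↦ le_of_lt (mem_Ioi.1 hx)
    _ ≤ exp (-s * s) * mgf id (gaussianReal 0 1) s :=
        measure_ge_le_exp_mul_mgf s hs (integrable_exp_mul_gaussianReal s)
    _ = exp (-s ^ 2 / 2) := by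
        rw [mgf_id_gaussianReal, ← exp_add]; congr 1; push_cast; ring

lemma hasDerivAt_exp_neg_sq_div_two (x : ℝ) :
    HasDerivAt (fun x ↦ exp (-x ^ 2 / 2)) (-x * exp (-x ^ 2 / 2)) x := by
  have h : HasDerivAt (fun x : ℝ ↦ -x ^ 2 / 2) (-x) x :=
    ((hasDerivAt_pow 2 x).neg.div_const 2).congr_deriv (by push_cast; ring)
  simpa only [mul_comm] using h.exp

lemma tendsto_exp_neg_sq_div_two : Tendsto (fun x ↦ exp (-x ^ 2 / 2)) atTop (𝓝 0) := by
  have h : Tendsto (fun x : ℝ ↦ -x ^ 2 / 2) atTop atBot :=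
    (tendsto_neg_atTop_atBot.comp (tendsto_pow_atTop two_ne_zero)).atBot_div_const two_pos
  exact tendsto_exp_atBot.comp h

lemma tendsto_mul_exp_neg_sq_div_two : Tendsto (fun x ↦ x * exp (-x ^ 2 / 2)) atTop (𝓝 0) := by
  have h := (rpow_mul_exp_neg_mul_sq_isLittleO_exp_neg one_half_pos 1).trans_tendsto
    (tendsto_exp_atBot.comp (tendsto_id.const_mul_atTop_of_neg (by norm_num : -(1 / 2 : ℝ) < 0)))
  refine h.congr fun x ↦ ?_
  simp only [rpow_one]
  ring_nf

lemma tendsto_Q_atTop : Tendsto Q atTop (𝓝 0) :=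
  squeeze_zero' (Eventually.of_forall Q_nonneg)
    (eventually_atTop.2 ⟨0, fun _ ↦ Q_le_exp_neg_sq_div_two⟩) tendsto_exp_neg_sq_div_two

lemma tendsto_mul_Q_atTop : Tendsto (fun x ↦ x * Q x) atTop (𝓝 0) :=
  squeeze_zero' (eventually_atTop.2 ⟨0, fun _ hx ↦ mul_nonneg hx (Q_nonneg _)⟩)
    (eventually_atTop.2 ⟨0, fun _ hx ↦ mul_le_mul_of_nonneg_left (Q_le_exp_neg_sq_div_two hx) hx⟩)
    tendsto_mul_exp_neg_sq_div_two

lemma exp_neg_sq_div_two_le_Q {s : ℝ} (hs : 0 ≤ s) :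
    exp (-s ^ 2 / 2) ≤ √(2 * π) * (s + lam0) * Q s := by
  refine sub_nonneg.1 <| nonneg_of_deriv2_nonpos_of_nonneg
    (g := fun x ↦ √(2 * π) * (x + lam0) * Q x - exp (-x ^ 2 / 2))
    (g' := fun x ↦ √(2 * π) * Q x - lam0 * exp (-x ^ 2 / 2))
    (g'' := fun x ↦ (lam0 * x - 1) * exp (-x ^ 2 / 2)) (b := lam0⁻¹)
    (fun x ↦ ?_) (fun x ↦ ?_) (fun x hx ↦ ?_) (fun x hx ↦ ?_) ?_ ?_ ?_ hs
  · refine ((((hasDerivAt_id' x).add_const lam0).const_mul √(2 * π)).mul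
      (hasDerivAt_Q x)).sub (hasDerivAt_exp_neg_sq_div_two x) |>.congr_deriv ?_
    linear_combination -(x + lam0) * sqrt_two_pi_mul_gaussianPDFReal x
  · refine ((hasDerivAt_Q x).const_mul √(2 * π)).sub
      ((hasDerivAt_exp_neg_sq_div_two x).const_mul lam0) |>.congr_deriv ?_
    linear_combination -sqrt_two_pi_mul_gaussianPDFReal x
  · have : lam0 * x < 1 := by simpa [lam0_pos.ne'] using mul_lt_mul_of_pos_left hx.2 lam0_pos
    exact mul_nonpos_of_nonpos_of_nonneg (by linarith) (exp_nonneg _)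
  · have : 1 < lam0 * x := by simpa [lam0_pos.ne'] using mul_lt_mul_of_pos_left hx.out lam0_pos
    exact mul_nonneg (by linarith) (exp_nonneg _)
  · have h := ((tendsto_mul_Q_atTop.add (tendsto_Q_atTop.const_mul lam0)).const_mul
      √(2 * π)).sub tendsto_exp_neg_sq_div_two
    simp only [mul_zero, add_zero, sub_zero] at h
    exact h.congr fun x ↦ by ring
  · simpa using (tendsto_Q_atTop.const_mul √(2 * π)).sub
      (tendsto_exp_neg_sq_div_two.const_mul lam0)
  · have h : exp (-(0 : ℝ) ^ 2 / 2) = 1 := by norm_num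
    rw [Q_zero, h]
    linarith [sqrt_two_pi_mul_lam0]

theorem Q_scaled_tail_bounds (t δ : ℝ) (ht : 0 ≤ t) (hδ : 0 ≤ δ) :
    Q t ^ (δ ^ 2) / (Real.sqrt (2 * Real.pi) * (δ * t + lam0)) ≤ Q (δ * t) ∧
    Q (δ * t) ≤ (Real.sqrt (2 * Real.pi) * (t + lam0)) ^ (δ ^ 2) * Q t ^ (δ ^ 2) := by
  have hδt : 0 ≤ δ * t := mul_nonneg hδ ht
  have hpow : exp (-t ^ 2 / 2) ^ (δ ^ 2) = exp (-(δ * t) ^ 2 / 2) := by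
    rw [← exp_mul]; ring_nf
  constructor
  · rw [div_le_iff₀ (by have := lam0_pos; positivity)]
    calc Q t ^ (δ ^ 2) ≤ exp (-t ^ 2 / 2) ^ (δ ^ 2) :=
          rpow_le_rpow (Q_nonneg t) (Q_le_exp_neg_sq_div_two ht) (sq_nonneg δ)
      _ = exp (-(δ * t) ^ 2 / 2) := hpow
      _ ≤ √(2 * π) * (δ * t + lam0) * Q (δ * t) := exp_neg_sq_div_two_le_Q hδt
      _ = Q (δ * t) * (√(2 * π) * (δ * t + lam0)) := mul_comm _ _
  · calc Q (δ * t) ≤ exp (-(δ * t) ^ 2 / 2) := Q_le_exp_neg_sq_div_two hδt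
      _ = exp (-t ^ 2 / 2) ^ (δ ^ 2) := hpow.symm
      _ ≤ (√(2 * π) * (t + lam0) * Q t) ^ (δ ^ 2) :=
          rpow_le_rpow (exp_nonneg _) (exp_neg_sq_div_two_le_Q ht) (sq_nonneg δ)
      _ = (√(2 * π) * (t + lam0)) ^ (δ ^ 2) * Q t ^ (δ ^ 2) :=
          mul_rpow (by have := lam0_pos; positivity) (Q_nonneg t)
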